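/- For the sequence λ : ℕ → ℝ obtained by listing 1/(2(2k+1)) with multiplicity 2k+1 for each k ≥ 0 in decreasing order, one has λ_j · √j → 1/4 as j → ∞ (along all indices j, not just j = k²). -/

import Mathlib

/-! Since `⌊√j⌋ ≤ √j < ⌊√j⌋ + 1`, the product `λ_j √j = √j / (4⌊√j⌋ + 2)` is squeezed between
`s / (4s + 2)` and `(s + 1) / (4s + 2)` with `s = ⌊√j⌋ → ∞`, and both bounds tend to `1/4`. -/

open Filter Topology

/-- The ordered NP eigenvalues of the unit sphere:
`λ_j = 1/(2(2k+1))` for `k² ≤ j < (k+1)²`, i.e. `λ_j = 1/(2(2⌊√j⌋+1))`. -/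
noncomputable def npSphereEigenvalue (j : ℕ) : ℝ :=
  1 / (2 * (2 * (Nat.sqrt j : ℝ) + 1))

theorem Nat.tendsto_sqrt_atTop : Tendsto Nat.sqrt atTop atTop :=
  Monotone.tendsto_atTop_atTop (fun _ _ => Nat.sqrt_le_sqrt) fun b => ⟨b * b, (Nat.sqrt_eq b).ge⟩

theorem npSphereEigenvalue_mul (j : ℕ) (x : ℝ) :
    npSphereEigenvalue j * x = x / (2 + 4 * Nat.sqrt j) := by
  rw [npSphereEigenvalue, one_div_mul_eq_div]
  ring_nf

/-- Along all indices, `λ_j · √j → 1/4`. -/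
theorem npSphereEigenvalue_weyl :
    Tendsto (fun j : ℕ => npSphereEigenvalue j * Real.sqrt j) atTop (𝓝 (1 / 4)) := by
  have bound (c : ℝ) : Tendsto (fun j : ℕ => (c + 1 * Nat.sqrt j) / (2 + 4 * Nat.sqrt j))
      atTop (𝓝 (1 / 4)) :=
    (tendsto_add_mul_div_add_mul_atTop_nhds c 2 1 four_ne_zero).comp Nat.tendsto_sqrt_atTop
  refine tendsto_of_tendsto_of_tendsto_of_le_of_le (bound 0) (bound 1) (fun j => ?_) (fun j => ?_)
  · rw [npSphereEigenvalue_mul]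
    gcongr
    linarith [Real.nat_sqrt_le_real_sqrt (a := j)]
  · rw [npSphereEigenvalue_mul]
    gcongr
    linarith [Real.real_sqrt_le_nat_sqrt_succ (a := j)]
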